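/- Let u, λ, t_j, t_k, t_l ∈ ℂ and assume that ϑ₁(u−t_j), ϑ₁(u−t_l), ϑ₁(t_j−t_l), ϑ₁(−λ), ϑ₁(λ−t_k+t_l) and ϑ₁(−λ+t_k−t_l) are all nonzero. Then (ϑ₁(u−t_k)/ϑ₁(u−t_l))·𝔰(u−t_j; λ−t_k+t_l) = (ϑ₁(t_j−t_k)/ϑ₁(t_j−t_l))·𝔰(u−t_j;λ) + (ϑ₁(t_k−t_l)·ϑ₁(λ−t_k+t_j) / (ϑ₁(t_j−t_l)·ϑ₁(λ−t_k+t_l)))·𝔰(u−t_l;λ). -/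

import Mathlib

open Complex Filter

/-- The theta function ϑ₁(u,τ). -/
noncomputable def theta (τ u : ℂ) : ℂ :=
  -∑' m : ℤ, Complex.exp ((Real.pi : ℂ) * Complex.I * (m + 1/2)^2 * τ +
    2 * (Real.pi : ℂ) * Complex.I * (m + 1/2) * (u + 1/2))

/-- Derivative ϑ₁′ in u. -/
noncomputable def theta' (τ : ℂ) : ℂ → ℂ := deriv (theta τ)

/-- ρ(u) = ϑ₁′(u)/ϑ₁(u). -/
noncomputable def rho (τ u : ℂ) : ℂ := theta' τ u / theta τ u

/-- 𝔰(u;λ) = ϑ₁(u−λ)ϑ₁′(0)/(ϑ₁(u)ϑ₁(−λ)). -/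
noncomputable def fraks (τ u lam : ℂ) : ℂ :=
  theta τ (u - lam) * theta' τ 0 / (theta τ u * theta τ (-lam))

/-! ### Auxiliary definitions and lemmas -/

/-- The summand of the series defining `theta`, with `w = u + 1/2`. -/
noncomputable def termS (τ w : ℂ) (m : ℤ) : ℂ :=
  Complex.exp ((Real.pi : ℂ) * Complex.I * (m + 1/2)^2 * τ +
    2 * (Real.pi : ℂ) * Complex.I * (m + 1/2) * w)

/-- The series `S(w) = ∑ exp(πi(m+1/2)²τ + 2πi(m+1/2)w)`, so `theta τ u = -S (u+1/2)`. -/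
noncomputable def St (τ w : ℂ) : ℂ := ∑' m : ℤ, termS τ w m

/-- `F(z) = θ₃(2z | 2τ)`-type series. -/
noncomputable def Ft (τ z : ℂ) : ℂ := jacobiTheta₂ (2*z) (2*τ)

/-- `G(z) = θ₂(2z | 2τ)`-type series. -/
noncomputable def Gt (τ z : ℂ) : ℂ := St (2*τ) (2*z)

lemma theta_eq (τ u : ℂ) : theta τ u = -St τ (u + 1/2) := rfl

lemma termS_eq (τ w : ℂ) (m : ℤ) :
    termS τ w m = Complex.exp ((Real.pi : ℂ) * Complex.I * τ / 4 + (Real.pi : ℂ) * Complex.I * w) *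
      jacobiTheta₂_term m (w + τ/2) τ := by
  rw [termS, jacobiTheta₂_term, ← Complex.exp_add]
  congr 1
  ring

lemma summable_norm_jtt {τ : ℂ} (hτ : 0 < τ.im) (z : ℂ) :
    Summable fun n : ℤ => ‖jacobiTheta₂_term n z τ‖ := by
  apply (summable_pow_mul_jacobiTheta₂_term_bound |z.im| hτ 0).of_nonneg_of_le
    (fun _ => norm_nonneg _)
  intro n
  simpa only [pow_zero, one_mul] using norm_jacobiTheta₂_term_le hτ le_rfl le_rfl n

lemma summable_norm_termS {τ : ℂ} (hτ : 0 < τ.im) (w : ℂ) :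
    Summable fun m : ℤ => ‖termS τ w m‖ := by
  simp_rw [termS_eq, norm_mul]
  exact (summable_norm_jtt hτ (w + τ/2)).mul_left _

lemma termEven (τ x y : ℂ) (a b : ℤ) :
    termS τ (x+y) (a+b) * termS τ (x-y) (a-b) =
      termS (2*τ) (2*x) a * jacobiTheta₂_term b (2*y) (2*τ) := by
  rw [termS, termS, termS, jacobiTheta₂_term, ← Complex.exp_add, ← Complex.exp_add]
  congr 1
  push_cast
  ring

lemma termOdd (τ x y : ℂ) (a b : ℤ) :
    termS τ (x+y) (a+b) * termS τ (x-y) (a-b-1) =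
      jacobiTheta₂_term a (2*x) (2*τ) * termS (2*τ) (2*y) b := by
  rw [termS, termS, termS, jacobiTheta₂_term, ← Complex.exp_add, ← Complex.exp_add]
  congr 1
  push_cast
  ring

/-- The set of lattice points with even coordinate sum. -/
def Epar : Set (ℤ × ℤ) := {p | (p.1 + p.2) % 2 = 0}

def eEven : (ℤ × ℤ) ≃ ↥Epar where
  toFun := fun ab => ⟨(ab.1 + ab.2, ab.1 - ab.2), by simp [Epar]; omega⟩
  invFun := fun p => ((p.1.1 + p.1.2)/2, (p.1.1 - p.1.2)/2)
  left_inv := by rintro ⟨a, b⟩; simp; omega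
  right_inv := by rintro ⟨⟨m, n⟩, h⟩; simp [Epar, Subtype.ext_iff, Prod.ext_iff] at h ⊢; omega

def eOdd : (ℤ × ℤ) ≃ ↥(Eparᶜ) where
  toFun := fun ab => ⟨(ab.1 + ab.2, ab.1 - ab.2 - 1), by simp [Epar]; omega⟩
  invFun := fun p => ((p.1.1 + p.1.2 + 1)/2, (p.1.1 - p.1.2 - 1)/2)
  left_inv := by rintro ⟨a, b⟩; simp; omega
  right_inv := by rintro ⟨⟨m, n⟩, h⟩; simp [Epar, Subtype.ext_iff, Prod.ext_iff] at h ⊢; omega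

/-- The fundamental product-splitting identity
`S(x+y)S(x−y) = G(x)F(y) + F(x)G(y)`. -/
lemma mulP {τ : ℂ} (hτ : 0 < τ.im) (x y : ℂ) :
    St τ (x+y) * St τ (x-y) = Gt τ x * Ft τ y + Ft τ x * Gt τ y := by
  have h2τ : 0 < (2*τ).im := by
    have : (2*τ).im = 2 * τ.im := by simp
    rw [this]; linarith
  have hA := summable_norm_termS hτ (x+y)
  have hB := summable_norm_termS hτ (x-y)
  set h : ℤ × ℤ → ℂ := fun p => termS τ (x+y) p.1 * termS τ (x-y) p.2 with hh
  have hsum : Summable h := summable_mul_of_summable_norm hA hB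
  have heven : (∑' p : ↥Epar, h ↑p) = Gt τ x * Ft τ y := by
    rw [← eEven.tsum_eq (fun p : ↥Epar => h ↑p)]
    have : ∀ ab : ℤ × ℤ, h ↑(eEven ab) =
        termS (2*τ) (2*x) ab.1 * jacobiTheta₂_term ab.2 (2*y) (2*τ) := by
      rintro ⟨a, b⟩
      exact termEven τ x y a b
    rw [tsum_congr this]
    rw [show Gt τ x * Ft τ y = (∑' a : ℤ, termS (2*τ) (2*x) a) *
        (∑' b : ℤ, jacobiTheta₂_term b (2*y) (2*τ)) from rfl]
    exact (tsum_mul_tsum_of_summable_norm (summable_norm_termS h2τ (2*x))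
      (summable_norm_jtt h2τ (2*y))).symm
  have hodd : (∑' p : ↥(Eparᶜ), h ↑p) = Ft τ x * Gt τ y := by
    rw [← eOdd.tsum_eq (fun p : ↥(Eparᶜ) => h ↑p)]
    have : ∀ ab : ℤ × ℤ, h ↑(eOdd ab) =
        jacobiTheta₂_term ab.1 (2*x) (2*τ) * termS (2*τ) (2*y) ab.2 := by
      rintro ⟨a, b⟩
      exact termOdd τ x y a b
    rw [tsum_congr this]
    rw [show Ft τ x * Gt τ y = (∑' a : ℤ, jacobiTheta₂_term a (2*x) (2*τ)) *
        (∑' b : ℤ, termS (2*τ) (2*y) b) from rfl]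
    exact (tsum_mul_tsum_of_summable_norm (summable_norm_jtt h2τ (2*x))
      (summable_norm_termS h2τ (2*y))).symm
  calc St τ (x+y) * St τ (x-y) = ∑' p : ℤ × ℤ, h p :=
        tsum_mul_tsum_of_summable_norm hA hB
    _ = (∑' p : ↥Epar, h ↑p) + (∑' p : ↥(Eparᶜ), h ↑p) :=
        (Summable.tsum_add_tsum_compl (hsum.subtype _) (hsum.subtype _)).symm
    _ = Gt τ x * Ft τ y + Ft τ x * Gt τ y := by rw [heven, hodd]

lemma St_add_one (τ w : ℂ) : St τ (w + 1) = -St τ w := by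
  rw [St, St, ← tsum_neg]
  refine tsum_congr fun m => ?_
  have : termS τ (w+1) m = termS τ w m * (Complex.exp ((m : ℂ) * (2 * (Real.pi:ℂ) * I)) *
      Complex.exp ((Real.pi:ℂ) * I)) := by
    rw [termS, termS, ← Complex.exp_add, ← Complex.exp_add]
    congr 1
    ring
  rw [this, Complex.exp_int_mul_two_pi_mul_I, Complex.exp_pi_mul_I]
  ring

lemma St_even (τ w : ℂ) : St τ (-w) = St τ w := by
  rw [St, St, ← (Equiv.subLeft (-1 : ℤ)).tsum_eq (termS τ w)]
  refine tsum_congr fun m => ?_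
  rw [Equiv.subLeft_apply, termS, termS]
  congr 1
  push_cast
  ring

lemma theta_odd (τ u : ℂ) : theta τ (-u) = -theta τ u := by
  have h3 := St_add_one τ (u - 1/2)
  rw [show (u - 1/2 : ℂ) + 1 = u + 1/2 by ring] at h3
  rw [theta_eq, theta_eq, show (-u + 1/2 : ℂ) = -(u - 1/2) by ring, St_even]
  linear_combination -h3

lemma Ft_add_half (τ z : ℂ) : Ft τ (z + 1/2) = Ft τ z := by
  rw [Ft, Ft, show 2*(z+1/2) = 2*z+1 by ring, jacobiTheta₂_add_left]

lemma Ft_neg (τ z : ℂ) : Ft τ (-z) = Ft τ z := by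
  rw [Ft, Ft, show 2*(-z) = -(2*z) by ring, jacobiTheta₂_neg_left]

lemma Gt_add_half (τ z : ℂ) : Gt τ (z + 1/2) = -Gt τ z := by
  rw [Gt, Gt, show 2*(z+1/2) = 2*z+1 by ring, St_add_one]

lemma Gt_neg (τ z : ℂ) : Gt τ (-z) = Gt τ z := by
  rw [Gt, Gt, show 2*(-z) = -(2*z) by ring, St_even]

/-- The product of two theta values as a 2×2 determinant in `Ft`/`Gt`. -/
lemma prodD {τ : ℂ} (hτ : 0 < τ.im) (x s : ℂ) :
    theta τ (x+s) * theta τ (x-s) = Ft τ x * Gt τ s - Gt τ x * Ft τ s := by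
  rw [theta_eq, theta_eq, neg_mul_neg, show x+s+1/2 = (x+1/2)+s by ring,
    show x-s+1/2 = (x+1/2)-s by ring, mulP hτ, Gt_add_half, Ft_add_half]
  ring

lemma prodD2 {τ : ℂ} (hτ : 0 < τ.im) (p q x s : ℂ) (hp : p = x + s) (hq : q = x - s) :
    theta τ p * theta τ q = Ft τ x * Gt τ s - Gt τ x * Ft τ s := by
  rw [hp, hq]; exact prodD hτ x s

/-- The Weierstrass three-term identity, specialized to the variables of the main theorem. -/
lemma key2 {τ : ℂ} (hτ : 0 < τ.im) (u lam tj tk tl : ℂ) :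
    theta τ (tj-tl) * theta τ (u-tk) * (theta τ lam * theta τ (u - tj - (lam - tk + tl))) =
      theta τ (u-tl) * theta τ (tj-tk) * (theta τ (u - tj - lam) * theta τ (lam - tk + tl)) +
      theta τ (u-tj) * theta τ (tk-tl) * (theta τ (u - tl - lam) * theta τ (lam - tk + tj)) := by
  rw [prodD2 hτ (tj-tl) (u-tk) ((u+tj-tk-tl)/2) ((tj+tk-tl-u)/2) (by ring) (by ring),
      prodD2 hτ lam (u - tj - (lam - tk + tl)) ((u-tj+tk-tl)/2) (lam-(u-tj+tk-tl)/2)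
        (by ring) (by ring),
      prodD2 hτ (u-tl) (tj-tk) ((u+tj-tk-tl)/2) ((u-tj+tk-tl)/2) (by ring) (by ring),
      prodD2 hτ (u - tj - lam) (lam - tk + tl) (-((tj+tk-tl-u)/2)) (-(lam-(u-tj+tk-tl)/2))
        (by ring) (by ring),
      prodD2 hτ (u-tj) (tk-tl) ((u-tj+tk-tl)/2) (-((tj+tk-tl-u)/2)) (by ring) (by ring),
      prodD2 hτ (u - tl - lam) (lam - tk + tj) ((u+tj-tk-tl)/2) (-(lam-(u-tj+tk-tl)/2))
        (by ring) (by ring)]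
  simp only [Ft_neg, Gt_neg]
  ring

theorem theta_relation_two (τ : ℂ) (hτ : 0 < τ.im) (u lam tj tk tl : ℂ)
    (h1 : theta τ (u - tj) ≠ 0) (h2 : theta τ (u - tl) ≠ 0)
    (h3 : theta τ (tj - tl) ≠ 0) (h4 : theta τ (-lam) ≠ 0)
    (h5 : theta τ (lam - tk + tl) ≠ 0) (h6 : theta τ (-lam + tk - tl) ≠ 0) :
    (theta τ (u - tk) / theta τ (u - tl)) * fraks τ (u - tj) (lam - tk + tl) =
      (theta τ (tj - tk) / theta τ (tj - tl)) * fraks τ (u - tj) lam +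
        (theta τ (tk - tl) * theta τ (lam - tk + tj) /
          (theta τ (tj - tl) * theta τ (lam - tk + tl))) * fraks τ (u - tl) lam := by
  have hlam : theta τ lam ≠ 0 := fun h => h4 (by rw [theta_odd, h, neg_zero])
  have hk := key2 hτ u lam tj tk tl
  simp only [fraks, theta_odd]
  field_simp
  linear_combination (-theta' τ 0) * hk
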